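/- arXiv:2010.03304 — 2 statements merged into one kernel-verified Lean document; each statement's English description precedes it below -/
import Mathlib

section
/- Let p be a prime and let n_1, ..., n_{i-1} be positive integers. Let b_1, ..., b_{i-1} be positive integers each coprime to p, and define m_v = p^{n_{v+1} + ... + n_{i-1}} * b_v for 1 ≤ v ≤ i-1 (so m_{i-1} = b_{i-1}), and G = p^{n_1 + ... + n_{i-1}}. Suppose (ℓ_0, ..., ℓ_{i-1}) and (w_0, ..., w_{i-1}) are tuples of natural numbers with 1 ≤ ℓ_λ < p^{n_λ} and 1 ≤ w_λ < p^{n_λ} for all 1 ≤ λ ≤ i-1, and ℓ_0·G + ℓ_1·m_1 + ... + ℓ_{i-1}·m_{i-1} = w_0·G + w_1·m_1 + ... + w_{i-1}·m_{i-1}. Then ℓ_λ = w_λ for all 0 ≤ λ ≤ i-1. -/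
/-!
Reducing the equation modulo `p ^ n_{i-1}` kills every term except `ℓ_{i-1} b_{i-1}` and
`w_{i-1} b_{i-1}`; as `b_{i-1}` is a unit modulo `p ^ n_{i-1}` and both coefficients are smaller
than `p ^ n_{i-1}`, they agree. Cancelling them and dividing by `p ^ n_{i-1}` leaves the same
equation with one generator fewer, so induction on the number of generators finishes.
-/

open Finset

namespace Nat

theorem eq_and_eq_of_mul_add_mul_eq {M b x y A B : ℕ} (hb : b.Coprime M) (hx : x < M)
    (hy : y < M) (h : A * M + x * b = B * M + y * b) : A = B ∧ x = y := by
  have hxy : x = y := by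
    have hmod : x * b ≡ y * b [MOD M] := by
      simpa [Nat.ModEq, Nat.add_mod, Nat.mul_mod_left] using congrArg (· % M) h
    simpa [Nat.ModEq, Nat.mod_eq_of_lt hx, Nat.mod_eq_of_lt hy] using
      hmod.cancel_right_of_coprime hb.symm
  subst hxy
  exact ⟨Nat.eq_of_mul_eq_mul_right (by omega) (Nat.add_right_cancel h), rfl⟩

end Nat

def mixedRadixSum (p : ℕ) (n b f : ℕ → ℕ) (k : ℕ) : ℕ :=
  f 0 * p ^ (∑ u ∈ Icc 1 k, n u) + ∑ v ∈ Icc 1 k, f v * (p ^ (∑ u ∈ Icc (v + 1) k, n u) * b v)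

namespace mixedRadixSum

variable {p : ℕ} {n b : ℕ → ℕ}

@[simp]
theorem zero (f : ℕ → ℕ) : mixedRadixSum p n b f 0 = f 0 := by
  simp [mixedRadixSum]

theorem succ (f : ℕ → ℕ) (k : ℕ) :
    mixedRadixSum p n b f (k + 1) =
      mixedRadixSum p n b f k * p ^ n (k + 1) + f (k + 1) * b (k + 1) := by
  have hinner : ∀ v ∈ Icc 1 k, f v * (p ^ (∑ u ∈ Icc (v + 1) (k + 1), n u) * b v) =
      f v * (p ^ (∑ u ∈ Icc (v + 1) k, n u) * b v) * p ^ n (k + 1) := by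
    intro v hv
    rw [sum_Icc_succ_top (by simp at hv; omega), pow_add]
    ring
  have hempty : Icc (k + 1 + 1) (k + 1) = ∅ := Icc_eq_empty (by omega)
  simp only [mixedRadixSum]
  rw [sum_Icc_succ_top (by omega), sum_Icc_succ_top (by omega), sum_congr rfl hinner, hempty,
    sum_empty, pow_zero, one_mul, pow_add, add_mul, sum_mul]
  ring

theorem eq_of_eq {k : ℕ} {ℓ w : ℕ → ℕ} (hb : ∀ v ∈ Icc 1 k, (b v).Coprime p)
    (hℓ : ∀ v ∈ Icc 1 k, ℓ v < p ^ n v) (hw : ∀ v ∈ Icc 1 k, w v < p ^ n v)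
    (h : mixedRadixSum p n b ℓ k = mixedRadixSum p n b w k) : ∀ v ≤ k, ℓ v = w v := by
  induction k with
  | zero =>
    intro v hv
    simpa [Nat.le_zero.mp hv] using h
  | succ k ih =>
    have htop : k + 1 ∈ Icc 1 (k + 1) := by simp
    have hsub : Icc 1 k ⊆ Icc 1 (k + 1) := Icc_subset_Icc_right (by omega)
    rw [succ, succ] at h
    obtain ⟨hrest, hlast⟩ := Nat.eq_and_eq_of_mul_add_mul_eq ((hb _ htop).pow_right _)
      (hℓ _ htop) (hw _ htop) h
    have hinit := ih (fun v hv => hb v (hsub hv)) (fun v hv => hℓ v (hsub hv))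
      (fun v hv => hw v (hsub hv)) hrest
    intro v hv
    rcases Nat.lt_or_eq_of_le hv with hlt | rfl
    · exact hinit v (by omega)
    · exact hlast

end mixedRadixSum

open Finset in
theorem stmt_0_general (p i : ℕ) (n b ℓ w : ℕ → ℕ)
    (hb : ∀ v ∈ Finset.Icc 1 (i - 1), 0 < b v ∧ Nat.Coprime (b v) p)
    (hℓ : ∀ v ∈ Finset.Icc 1 (i - 1), 1 ≤ ℓ v ∧ ℓ v < p ^ n v)
    (hw : ∀ v ∈ Finset.Icc 1 (i - 1), 1 ≤ w v ∧ w v < p ^ n v)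
    (heq : ℓ 0 * p ^ (∑ u ∈ Finset.Icc 1 (i - 1), n u)
        + ∑ v ∈ Finset.Icc 1 (i - 1), ℓ v * (p ^ (∑ u ∈ Finset.Icc (v + 1) (i - 1), n u) * b v)
      = w 0 * p ^ (∑ u ∈ Finset.Icc 1 (i - 1), n u)
        + ∑ v ∈ Finset.Icc 1 (i - 1), w v * (p ^ (∑ u ∈ Finset.Icc (v + 1) (i - 1), n u) * b v)) :
    ∀ v ≤ i - 1, ℓ v = w v :=
  mixedRadixSum.eq_of_eq (fun v hv => (hb v hv).2) (fun v hv => (hℓ v hv).2)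
    (fun v hv => (hw v hv).2) heq

open Finset in
theorem stmt_0 (p i : ℕ) (hp : p.Prime) (hi : 1 ≤ i) (n b ℓ w : ℕ → ℕ)
    (hn : ∀ v ∈ Finset.Icc 1 (i - 1), 0 < n v)
    (hb : ∀ v ∈ Finset.Icc 1 (i - 1), 0 < b v ∧ Nat.Coprime (b v) p)
    (hℓ : ∀ v ∈ Finset.Icc 1 (i - 1), 1 ≤ ℓ v ∧ ℓ v < p ^ n v)
    (hw : ∀ v ∈ Finset.Icc 1 (i - 1), 1 ≤ w v ∧ w v < p ^ n v)
    (heq : ℓ 0 * p ^ (∑ u ∈ Finset.Icc 1 (i - 1), n u)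
        + ∑ v ∈ Finset.Icc 1 (i - 1), ℓ v * (p ^ (∑ u ∈ Finset.Icc (v + 1) (i - 1), n u) * b v)
      = w 0 * p ^ (∑ u ∈ Finset.Icc 1 (i - 1), n u)
        + ∑ v ∈ Finset.Icc 1 (i - 1), w v * (p ^ (∑ u ∈ Finset.Icc (v + 1) (i - 1), n u) * b v)) :
    ∀ v ≤ i - 1, ℓ v = w v :=
  stmt_0_general p i n b ℓ w hb hℓ hw heq
end

section
/- Let m and q be coprime integers with m, q ≥ 2, and set g = (m − 1)(q − 1)/2. Then the number of pairs (i_0, i_1) ∈ ℕ² with i_0·q + i_1·m ≤ 2g − 2 equals g. -/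
/-!
Every lattice point with `i q + j m ≤ 2g - 2` lies in the rectangle `[0, m - 2] × [0, q - 2]`,
which has `(m - 1)(q - 1) = 2g` points. The reflection `(i, j) ↦ (m - 2 - i, q - 2 - j)` of the
rectangle sends `v = i q + j m` to `2c - v`, where `c = mq - m - q = 2g - 1` is the Frobenius
number of `m` and `q`; since `c` itself is never attained, the reflection swaps the points with
`v < c` and those with `v > c`, so exactly `g` of them satisfy `v ≤ 2g - 2`.
-/

open Finset

theorem Finset.two_mul_card_filter_lt_of_involution {α : Type*} (s : Finset α) (σ : α → α)
    (v : α → ℕ) (c : ℕ) (hσs : ∀ x ∈ s, σ x ∈ s) (hσσ : ∀ x ∈ s, σ (σ x) = x)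
    (hv : ∀ x ∈ s, v x + v (σ x) = 2 * c) (hc : ∀ x ∈ s, v x ≠ c) :
    2 * #{x ∈ s | v x < c} = #s := by
  have hswap : #{x ∈ s | v x < c} = #{x ∈ s | c < v x} := by
    refine card_nbij' σ σ ?_ ?_ (fun x hx => hσσ x (mem_filter.1 hx).1)
      (fun x hx => hσσ x (mem_filter.1 hx).1) <;>
    · intro x hx
      obtain ⟨hxs, -⟩ := mem_filter.1 hx
      have := hv x hxs
      simp only [coe_filter, Set.mem_ofPred_eq] at hx ⊢
      exact ⟨hσs x hxs, by omega⟩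
  have hsplit : #{x ∈ s | v x < c} + #{x ∈ s | c < v x} = #s := by
    rw [filter_congr fun x hx => show c < v x ↔ ¬ v x < c by have := hc x hx; omega]
    exact card_filter_add_card_filter_not _
  omega

theorem Nat.Coprime.even_sub_one_mul_sub_one {m q : ℕ} (h : Nat.Coprime m q) :
    Even ((m - 1) * (q - 1)) := by
  rcases Nat.even_or_odd m with hm | hm
  · have hq : Odd q := (Coprime.coprime_dvd_left hm.two_dvd h).odd_of_left
    exact (Nat.Odd.sub_odd hq odd_one).mul_left _
  · exact (Nat.Odd.sub_odd hm odd_one).mul_right _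

section
variable {m q c : ℕ}

theorem lt_sub_one_of_mul_add_mul_lt (hc : m * q = c + m + q) {i j : ℕ}
    (h : i * q + j * m < c) : i < m - 1 :=
  Nat.lt_sub_of_add_lt <|
    Nat.lt_of_mul_lt_mul_right (a := q) (by rw [add_one_mul]; linarith [Nat.zero_le (j * m)])

theorem lt_sub_one_and_lt_sub_one_of_mul_add_mul_lt (hc : m * q = c + m + q) {i j : ℕ}
    (h : i * q + j * m < c) : i < m - 1 ∧ j < q - 1 :=
  ⟨lt_sub_one_of_mul_add_mul_lt hc h,
    lt_sub_one_of_mul_add_mul_lt (by rw [mul_comm, hc]; ring)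
      (by rwa [add_comm] : j * m + i * q < c)⟩

theorem mul_add_mul_ne_of_coprime (hcop : Nat.Coprime m q) (hc : m * q = c + m + q) (i j : ℕ) :
    i * q + j * m ≠ c := by
  intro h
  apply hcop.mul_add_mul_ne_mul (a := j + 1) (b := i + 1) j.succ_ne_zero i.succ_ne_zero
  rw [hc, ← h]
  ring

theorem mul_add_mul_add_complement_eq_two_mul (hc : m * q = c + m + q) {i j a b : ℕ}
    (ha : i + a + 2 = m) (hb : j + b + 2 = q) : i * q + j * m + (a * q + b * m) = 2 * c := by
  subst ha hb
  nlinarith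

theorem two_mul_card_filter_lt_frobenius (hcop : Nat.Coprime m q) (hc : m * q = c + m + q) :
    2 * #{x ∈ range (m - 1) ×ˢ range (q - 1) | x.1 * q + x.2 * m < c} = (m - 1) * (q - 1) := by
  refine (two_mul_card_filter_lt_of_involution _ (fun x => (m - 2 - x.1, q - 2 - x.2)) _ c
    ?_ ?_ ?_ ?_).trans (by rw [card_product, card_range, card_range])
  · intro x hx
    simp only [mem_product, mem_range] at hx ⊢
    omega
  · intro x hx
    simp only [mem_product, mem_range] at hx
    ext <;> dsimp only <;> omega
  · rintro ⟨i, j⟩ hx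
    simp only [mem_product, mem_range] at hx
    exact mul_add_mul_add_complement_eq_two_mul hc (by omega) (by omega)
  · rintro ⟨i, j⟩ -
    exact mul_add_mul_ne_of_coprime hcop hc i j

end

theorem stmt_6 (m q g : ℕ) (hm : 2 ≤ m) (hq : 2 ≤ q) (hcop : Nat.Coprime m q)
    (hg : g = (m - 1) * (q - 1) / 2) :
    {x : ℕ × ℕ | x.1 * q + x.2 * m ≤ 2 * g - 2}.ncard = g := by
  have h2g : 2 * g = (m - 1) * (q - 1) := by
    rw [hg, Nat.mul_div_cancel' hcop.even_sub_one_mul_sub_one.two_dvd]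
  have hg0 : 0 < g := by
    have := Nat.mul_pos (by omega : 0 < m - 1) (by omega : 0 < q - 1)
    omega
  have hc : m * q = (2 * g - 1) + m + q := by
    obtain ⟨a, rfl⟩ : ∃ a, m = a + 1 := ⟨m - 1, by omega⟩
    obtain ⟨b, rfl⟩ : ∃ b, q = b + 1 := ⟨q - 1, by omega⟩
    simp only [Nat.add_sub_cancel] at h2g
    have : (a + 1) * (b + 1) = a * b + a + b + 1 := by ring
    omega
  have hS : {x : ℕ × ℕ | x.1 * q + x.2 * m ≤ 2 * g - 2} =
      ↑{x ∈ range (m - 1) ×ˢ range (q - 1) | x.1 * q + x.2 * m < 2 * g - 1} := by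
    ext ⟨i, j⟩
    simp only [Set.mem_ofPred_eq, coe_filter, mem_product, mem_range]
    refine ⟨fun h => ?_, fun h => by omega⟩
    have hlt : i * q + j * m < 2 * g - 1 := by omega
    exact ⟨lt_sub_one_and_lt_sub_one_of_mul_add_mul_lt hc hlt, hlt⟩
  rw [hS, Set.ncard_coe_finset]
  have := two_mul_card_filter_lt_frobenius hcop hc
  omega
end
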